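/- arXiv:1603.08097 — 2 statements merged into one kernel-verified Lean document; each statement's English description precedes it below -/
import Mathlib

section
/- Theorem 3. Let λ be a real number and let j, k, p be natural numbers with j ≥ 1 and 4jp + 2k ≥ 2j + 1. Then the series ∑_{r=p}^∞ arctan( 5λ·F_{2j}·F_{4jr+2k−1} / (L_{8jr+4k−2} − L_{4j} + λ²) ) converges and its sum equals arctan( λ / L_{4jp+2k−2j−1} ). -/
def lucas : ℕ → ℕ
  | 0 => 2
  | 1 => 1
  | n + 2 => lucas (n + 1) + lucas n

/-!
With `s = 4jp + 2k - 2j - 1 + 4jr` (odd) and `t = j`, the Binet formulas give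
`L_s L_{s+4t} = L_{2s+4t} - L_{4t}` and `L_{s+4t} - L_s = 5 F_{2t} F_{s+2t}`, so by the
subtraction formula for `arctan` the `r`-th term is `arctan (λ / L_s) - arctan (λ / L_{s+4t})`.
The series telescopes, and since all its terms have the sign of `λ` it converges unconditionally.
-/

open Real Filter Topology goldenRatio

theorem coe_lucas_eq : ∀ n, (lucas n : ℝ) = φ ^ n + ψ ^ n
  | 0 => by norm_num [lucas]
  | 1 => by simp [lucas, goldenRatio_add_goldenConj]
  | n + 2 => by
    rw [lucas, Nat.cast_add, coe_lucas_eq n, coe_lucas_eq (n + 1)]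
    linear_combination (-φ ^ n) * goldenRatio_sq - ψ ^ n * goldenConj_sq

theorem lucas_pos : ∀ n, 0 < lucas n
  | 0 | 1 => by decide
  | n + 2 => Nat.add_pos_left (lucas_pos (n + 1)) _

theorem self_le_lucas : ∀ n, n ≤ lucas n
  | 0 | 1 => by decide
  | n + 2 => by have := self_le_lucas (n + 1); have := lucas_pos n; rw [lucas]; omega

theorem five_mul_fib_mul_fib (m n : ℕ) :
    5 * (Nat.fib m : ℝ) * Nat.fib n = (φ ^ m - ψ ^ m) * (φ ^ n - ψ ^ n) := by
  have h5 : √5 ^ 2 = 5 := sq_sqrt (by norm_num)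
  rw [coe_fib_eq, coe_fib_eq]
  field_simp
  rw [h5]
  ring

theorem lucas_add_two_mul (a b : ℕ) :
    (lucas (a + 2 * b) : ℝ) = (-1) ^ b * lucas a + 5 * Nat.fib (a + b) * Nat.fib b := by
  have h : φ ^ b * ψ ^ b = (-1) ^ b := by rw [← mul_pow, goldenRatio_mul_goldenConj]
  rw [five_mul_fib_mul_fib, coe_lucas_eq, coe_lucas_eq]
  generalize φ = x, ψ = y at h ⊢
  linear_combination (x ^ a + y ^ a) * h

theorem lucas_mul_lucas_add (a b : ℕ) :
    (lucas a * lucas (a + b) : ℝ) = lucas (2 * a + b) + (-1) ^ a * lucas b := by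
  have h : φ ^ a * ψ ^ a = (-1) ^ a := by rw [← mul_pow, goldenRatio_mul_goldenConj]
  rw [coe_lucas_eq, coe_lucas_eq, coe_lucas_eq, coe_lucas_eq]
  generalize φ = x, ψ = y at h ⊢
  linear_combination (x ^ b + y ^ b) * h

theorem arctan_div_sub_arctan_div {a b : ℝ} (hab : 0 < a * b) (lam : ℝ) :
    arctan (lam / a) - arctan (lam / b) = arctan (lam * (b - a) / (a * b + lam ^ 2)) := by
  obtain ⟨ha, hb⟩ := mul_ne_zero_iff.1 hab.ne'
  have hprod : lam / a * -(lam / b) = -(lam ^ 2 / (a * b)) := by ring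
  have hlt : lam / a * -(lam / b) < 1 := by
    rw [hprod]; linarith [div_nonneg (sq_nonneg lam) hab.le]
  have hD : a * b + lam ^ 2 ≠ 0 := by positivity
  rw [sub_eq_add_neg, ← arctan_neg, arctan_add hlt]
  congr 1
  rw [div_eq_div_iff (sub_pos.2 hlt).ne' hD]
  field_simp
  ring

theorem lucas_add_four_mul (s t : ℕ) :
    (lucas (s + 4 * t) : ℝ) = lucas s + 5 * Nat.fib (s + 2 * t) * Nat.fib (2 * t) := by
  have h := lucas_add_two_mul s (2 * t)
  rwa [show s + 2 * (2 * t) = s + 4 * t by ring, (even_two_mul t).neg_one_pow, one_mul] at h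

theorem arctan_fib_mul_fib_div_lucas (lam : ℝ) {s : ℕ} (hs : Odd s) (t : ℕ) :
    arctan (5 * lam * Nat.fib (2 * t) * Nat.fib (s + 2 * t) /
        (lucas (2 * s + 4 * t) - lucas (4 * t) + lam ^ 2))
      = arctan (lam / lucas s) - arctan (lam / lucas (s + 4 * t)) := by
  have hprod : (lucas (2 * s + 4 * t) : ℝ) - lucas (4 * t) = lucas s * lucas (s + 4 * t) := by
    rw [lucas_mul_lucas_add, hs.neg_one_pow]
    ring
  have hpos : (0 : ℝ) < lucas s * lucas (s + 4 * t) := by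
    have := lucas_pos s; have := lucas_pos (s + 4 * t); positivity
  rw [arctan_div_sub_arctan_div hpos, hprod, lucas_add_four_mul]
  ring_nf

theorem hasSum_sub_succ_of_antitone {g : ℕ → ℝ} {l : ℝ} (hg : Antitone g)
    (hl : Tendsto g atTop (𝓝 l)) : HasSum (fun n => g n - g (n + 1)) (g 0 - l) := by
  rw [hasSum_iff_tendsto_nat_of_nonneg fun n => sub_nonneg.2 (hg n.le_succ)]
  simp_rw [Finset.sum_range_sub']
  exact tendsto_const_nhds.sub hl

theorem hasSum_sub_succ_of_monotone {g : ℕ → ℝ} {l : ℝ} (hg : Monotone g)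
    (hl : Tendsto g atTop (𝓝 l)) : HasSum (fun n => g n - g (n + 1)) (g 0 - l) := by
  have h := (hasSum_sub_succ_of_antitone hg.neg hl.neg).neg
  simp only [neg_sub, sub_neg_eq_add, neg_add_eq_sub] at h
  exact h

theorem hasSum_arctan_div_sub_arctan_div {u : ℕ → ℝ} (hpos : ∀ n, 0 < u n) (hu : Monotone u)
    (hlim : Tendsto u atTop atTop) (lam : ℝ) :
    HasSum (fun n => arctan (lam / u n) - arctan (lam / u (n + 1))) (arctan (lam / u 0)) := by
  have hg : Tendsto (fun n => arctan (lam / u n)) atTop (𝓝 0) := by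
    simpa [Function.comp_def] using
      (continuous_arctan.tendsto 0).comp (tendsto_const_nhds.div_atTop hlim)
  rw [← sub_zero (arctan (lam / u 0))]
  rcases le_total 0 lam with hlam | hlam
  · refine hasSum_sub_succ_of_antitone (fun m n hmn => arctan_mono ?_) hg
    exact div_le_div_of_nonneg_left hlam (hpos m) (hu hmn)
  · refine hasSum_sub_succ_of_monotone (fun m n hmn => arctan_mono ?_) hg
    have := div_le_div_of_nonneg_left (neg_nonneg.2 hlam) (hpos m) (hu hmn)
    rwa [neg_div, neg_div, neg_le_neg_iff] at this

theorem theorem3 (lam : ℝ) (j k p : ℕ) (hj : 1 ≤ j)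
    (h : 2 * j + 1 ≤ 4 * j * p + 2 * k) :
    HasSum (fun r : ℕ =>
        Real.arctan (5 * lam * (Nat.fib (2 * j) : ℝ) *
            (Nat.fib (4 * j * (p + r) + 2 * k - 1) : ℝ) /
          ((lucas (8 * j * (p + r) + 4 * k - 2) : ℝ) - (lucas (4 * j) : ℝ) + lam ^ 2)))
      (Real.arctan (lam / (lucas (4 * j * p + 2 * k - 2 * j - 1) : ℝ))) := by
  -- `2 * c + 1` is the odd index `4jp + 2k - 2j - 1`, free of truncated subtraction
  obtain ⟨c, hc⟩ : ∃ c, 4 * j * p + 2 * k = 2 * c + 2 * j + 2 :=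
    ⟨2 * j * p + k - j - 1, by rw [show 4 * j * p = 2 * (2 * j * p) by ring] at h ⊢; omega⟩
  set s : ℕ → ℕ := fun r => 2 * c + 1 + 4 * j * r with hs
  have hs_succ (r : ℕ) : s (r + 1) = s r + 4 * j := by simp only [hs]; ring
  have hu_mono : Monotone fun r => (lucas (s r) : ℝ) := monotone_nat_of_le_succ fun r => by
    rw [hs_succ, lucas_add_four_mul]
    exact le_add_of_nonneg_right (by positivity)
  have hu_lim : Tendsto (fun r => (lucas (s r) : ℝ)) atTop atTop := by
    refine tendsto_atTop_mono (fun r => ?_) tendsto_natCast_atTop_atTop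
    exact_mod_cast (le_add_left (Nat.le_mul_of_pos_left r (by omega))).trans (self_le_lucas (s r))
  have hterm (r : ℕ) : 4 * j * (p + r) + 2 * k - 1 = s r + 2 * j ∧
      8 * j * (p + r) + 4 * k - 2 = 2 * s r + 4 * j := by
    have : 4 * j * (p + r) = 4 * j * p + 4 * j * r := by ring
    have : 8 * j * (p + r) = 2 * (4 * j * p) + 2 * (4 * j * r) := by ring
    simp only [hs]; omega
  have hs0 : 4 * j * p + 2 * k - 2 * j - 1 = s 0 := by simp only [hs]; omega
  rw [hs0]
  convert hasSum_arctan_div_sub_arctan_div (fun r => Nat.cast_pos.2 (lucas_pos (s r))) hu_mono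
    hu_lim lam using 2 with r
  rw [(hterm r).1, (hterm r).2, hs_succ]
  exact arctan_fib_mul_fib_div_lucas lam ⟨c + 2 * j * r, by simp only [hs]; ring⟩ j
end

section
/- For every natural number j ≥ 1, the series ∑_{r=1}^∞ arctan( F_{2j}²·L_{4jr−2j} / F_{4jr−2j}² ) converges and its sum equals π/2. -/
/-!
Put `k = 2j`, `p = 4jr`, `x = F_{p+2k} / F_k` and `y = F_p / F_k`. Since `k` and `p` are even,
`F_{p+2k} - F_p = F_k L_{p+k}` and Catalan's identity `F_p F_{p+2k} + F_k² = F_{p+k}²` give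
`(x - y) / (1 + x y) = F_k² L_{p+k} / F_{p+k}²`, so the `r`-th term is `arctan x - arctan y`.
The series telescopes, and its partial sums `arctan (F_{4jn} / F_{2j})` increase to `π / 2`.
-/

open Real Filter Topology Finset
open scoped goldenRatio

lemma lucas_eq_goldenRatio_pow_add_goldenConj_pow (n : ℕ) : (lucas n : ℝ) = φ ^ n + ψ ^ n := by
  induction n using Nat.twoStepInduction with
  | zero => norm_num [lucas]
  | one => norm_num [lucas, goldenRatio_add_goldenConj]
  | more n ih₁ ih₀ =>
    rw [lucas, Nat.cast_add, ih₁, ih₀, pow_add φ n 2, pow_add ψ n 2, goldenRatio_sq, goldenConj_sq]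
    ring

lemma goldenRatio_pow_mul_goldenConj_pow (n : ℕ) : φ ^ n * ψ ^ n = (-1) ^ n := by
  rw [← mul_pow, goldenRatio_mul_goldenConj]

lemma fib_add_two_mul_sub_neg_one_pow_mul_fib (p k : ℕ) :
    (Nat.fib (p + 2 * k) : ℝ) - (-1) ^ k * Nat.fib p = Nat.fib k * lucas (p + k) := by
  have h := goldenRatio_pow_mul_goldenConj_pow k
  rw [two_mul, ← add_assoc]
  simp only [coe_fib_eq, lucas_eq_goldenRatio_pow_add_goldenConj_pow, pow_add]
  generalize φ ^ k = a, ψ ^ k = b at h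
  generalize φ ^ p = A, ψ ^ p = B
  have h5 : √5 ≠ 0 := by positivity
  field_simp
  linear_combination (A - B) * h

lemma fib_mul_fib_add_two_mul_add_neg_one_pow_mul_sq (p k : ℕ) :
    (Nat.fib p : ℝ) * Nat.fib (p + 2 * k) + (-1) ^ p * Nat.fib k ^ 2 = Nat.fib (p + k) ^ 2 := by
  have h := goldenRatio_pow_mul_goldenConj_pow p
  rw [two_mul, ← add_assoc]
  simp only [coe_fib_eq, pow_add]
  generalize φ ^ p = A, ψ ^ p = B at h
  generalize φ ^ k = a, ψ ^ k = b
  have h5 : √5 ≠ 0 := by positivity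
  field_simp
  linear_combination -(a - b) ^ 2 * h

lemma arctan_sub_arctan {x y : ℝ} (h : -1 < x * y) :
    arctan x - arctan y = arctan ((x - y) / (1 + x * y)) := by
  rw [sub_eq_add_neg, ← arctan_neg, arctan_add (by linarith)]
  ring_nf

lemma arctan_fib_sq_mul_lucas_div_fib_sq {p k : ℕ} (hp : Even p) (hk : Even k) (hk₀ : k ≠ 0) :
    arctan (Nat.fib k ^ 2 * lucas (p + k) / Nat.fib (p + k) ^ 2) =
      arctan (Nat.fib (p + 2 * k) / Nat.fib k) - arctan (Nat.fib p / Nat.fib k) := by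
  have hFk : (Nat.fib k : ℝ) ≠ 0 := by simpa [Nat.fib_eq_zero]
  have hFpk : (Nat.fib (p + k) : ℝ) ≠ 0 := by simp [Nat.fib_eq_zero, hk₀]
  have hdiff := fib_add_two_mul_sub_neg_one_pow_mul_fib p k
  have hcatalan := fib_mul_fib_add_two_mul_add_neg_one_pow_mul_sq p k
  rw [hk.neg_one_pow, one_mul] at hdiff
  rw [hp.neg_one_pow, one_mul] at hcatalan
  have hxy : (0 : ℝ) ≤ Nat.fib (p + 2 * k) / Nat.fib k * (Nat.fib p / Nat.fib k) := by positivity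
  rw [arctan_sub_arctan (by linarith)]
  congr 1
  field_simp
  rw [hdiff]
  linear_combination (Nat.fib k * lucas (p + k) : ℝ) * hcatalan

lemma hasSum_sub_of_monotone_of_tendsto {G : ℕ → ℝ} {l : ℝ} (hG : Monotone G)
    (h : Tendsto G atTop (𝓝 l)) : HasSum (fun n ↦ G (n + 1) - G n) (l - G 0) := by
  rw [hasSum_iff_tendsto_nat_of_nonneg fun n ↦ sub_nonneg.2 (hG n.le_succ)]
  simpa only [sum_range_sub] using h.sub_const (G 0)

lemma tendsto_fib_atTop : Tendsto Nat.fib atTop atTop :=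
  Nat.fib_mono.tendsto_atTop_atTop fun b ↦
    ⟨b + 5, (b.le_add_right 5).trans (Nat.le_fib_self le_add_self)⟩

lemma tendsto_arctan_fib_mul_div_fib {m k : ℕ} (hm : m ≠ 0) (hk : k ≠ 0) :
    Tendsto (fun n ↦ arctan (Nat.fib (m * n) / Nat.fib k)) atTop (𝓝 (π / 2)) := by
  have hFk : (0 : ℝ) < Nat.fib k := by simpa [Nat.fib_pos] using Nat.pos_of_ne_zero hk
  have hmul : Tendsto (m * ·) atTop atTop := tendsto_id.const_mul_atTop' (Nat.pos_of_ne_zero hm)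
  refine (tendsto_arctan_atTop.mono_right nhdsWithin_le_nhds).comp ?_
  exact (tendsto_natCast_atTop_atTop.comp (tendsto_fib_atTop.comp hmul)).atTop_div_const hFk

lemma monotone_arctan_fib_mul_div_fib (m k : ℕ) :
    Monotone fun n ↦ arctan (Nat.fib (m * n) / Nat.fib k) := fun _ _ h ↦
  arctan_strictMono.monotone <| by gcongr

theorem stmt7 (j : ℕ) (hj : 1 ≤ j) :
    HasSum (fun r : ℕ =>
        Real.arctan ((Nat.fib (2 * j) : ℝ) ^ 2 * (lucas (4 * j * (1 + r) - 2 * j) : ℝ) /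
          (Nat.fib (4 * j * (1 + r) - 2 * j) : ℝ) ^ 2))
      (Real.pi / 2) := by
  have hk : Even (2 * j) := even_two_mul j
  have hk₀ : 2 * j ≠ 0 := by omega
  have hterm (r : ℕ) :
      arctan ((Nat.fib (2 * j) : ℝ) ^ 2 * lucas (4 * j * (1 + r) - 2 * j) /
          Nat.fib (4 * j * (1 + r) - 2 * j) ^ 2) =
        arctan (Nat.fib (4 * j * (r + 1)) / Nat.fib (2 * j)) -
          arctan (Nat.fib (4 * j * r) / Nat.fib (2 * j)) := by
    rw [show 4 * j * (1 + r) - 2 * j = 4 * j * r + 2 * j by rw [mul_add, mul_one]; omega,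
      show 4 * j * (r + 1) = 4 * j * r + 2 * (2 * j) by ring,
      arctan_fib_sq_mul_lucas_div_fib_sq ⟨2 * j * r, by ring⟩ hk hk₀]
  simpa [hterm] using hasSum_sub_of_monotone_of_tendsto
    (monotone_arctan_fib_mul_div_fib (4 * j) (2 * j)) (tendsto_arctan_fib_mul_div_fib (by omega) hk₀)
end
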